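/- For any Parikh vector P with total length n = Σ_i P[i], the diameter of the configuration graph G(P) is at most n − max_{i∈Σ} P[i]: any word w with Parikh vector P can be transformed into any word v with the same Parikh vector using at most n − max_i P[i] 2-swaps. -/

import Mathlib

/-!
Fix a letter `a` of maximal multiplicity and count the positions where `w` and `v` differ and
`v` does not carry `a`; this count is at most `#{i | v i ≠ a} = n - P a`. If some such position
`i` exists, let `b = v i`: since `w` and `v` contain equally many `b`s, some `j` has
`w j = b ≠ v j`, and swapping `i` and `j` repairs `i` without creating a new counted position.
If none exists, every mismatch of `w` carries `a` in `v` but not in `w`, and since both words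
contain equally many `a`s there are no mismatches at all.
-/

/-- The Parikh vector of a word `w : Fin n → Fin σ`. -/
def parikh {n σ : ℕ} (w : Fin n → Fin σ) : Fin σ → ℕ :=
  fun a => (Finset.univ.filter fun i => w i = a).card

/-- Words of length `n` over alphabet `Fin σ` with Parikh vector `P`. -/
abbrev Words (n σ : ℕ) (P : Fin σ → ℕ) := {w : Fin n → Fin σ // parikh w = P}

/-- `u` is obtained from `w` by a single 2-swap. -/
def isSwap {n σ : ℕ} (w u : Fin n → Fin σ) : Prop :=
  ∃ i j : Fin n, i ≠ j ∧ w i ≠ w j ∧ u = w ∘ Equiv.swap i j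

/-- The configuration graph `G(P)`. -/
def configGraph (n σ : ℕ) (P : Fin σ → ℕ) : SimpleGraph (Words n σ P) :=
  SimpleGraph.fromRel fun w u => isSwap w.1 u.1

open Finset

variable {n σ : ℕ}

theorem parikh_comp_perm (w : Fin n → Fin σ) (e : Equiv.Perm (Fin n)) :
    parikh (w ∘ e) = parikh w := by
  funext a
  exact card_equiv e (by simp)

theorem card_filter_eq_and_ne_comm {w v : Fin n → Fin σ} (h : parikh w = parikh v) (b : Fin σ) :
    #{i | w i = b ∧ v i ≠ b} = #{i | v i = b ∧ w i ≠ b} := by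
  simp only [ne_eq]
  have hw := card_filter_add_card_filter_not (s := {i | w i = b}) (fun i => v i = b)
  have hv := card_filter_add_card_filter_not (s := {i | v i = b}) (fun i => w i = b)
  simp only [filter_filter] at hw hv
  have hb : #{i | w i = b} = #{i | v i = b} := congrFun h b
  have hboth : #{i | w i = b ∧ v i = b} = #{i | v i = b ∧ w i = b} := by simp only [and_comm]
  omega

theorem eq_of_parikh_eq_of_forall_ne {w v : Fin n → Fin σ} (h : parikh w = parikh v) (a : Fin σ)
    (hmis : ∀ i, w i ≠ v i → v i = a) : w = v := by
  have hout : #{i | w i = a ∧ v i ≠ a} = 0 :=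
    card_eq_zero.2 <| filter_eq_empty_iff.2 fun i _ ⟨hwi, hvi⟩ =>
      hvi (hmis i (hwi ▸ Ne.symm hvi))
  have hin := (card_filter_eq_and_ne_comm h a).symm.trans hout
  funext i
  by_contra hi
  exact filter_eq_empty_iff.1 (card_eq_zero.1 hin) (mem_univ i) ⟨hmis i hi, hmis i hi ▸ hi⟩

theorem exists_eq_and_ne_of_parikh_eq {w v : Fin n → Fin σ} (h : parikh w = parikh v) {i : Fin n}
    (hi : w i ≠ v i) : ∃ j, w j = v i ∧ v j ≠ v i := by
  have hpos : 0 < #{k | v k = v i ∧ w k ≠ v i} := card_pos.2 ⟨i, by simpa using hi⟩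
  rw [← card_filter_eq_and_ne_comm h] at hpos
  obtain ⟨j, hj⟩ := card_pos.1 hpos
  exact ⟨j, (mem_filter.1 hj).2⟩

theorem filter_comp_swap_subset_erase {w v : Fin n → Fin σ} (a : Fin σ) {i j : Fin n}
    (hj : w j = v i) (hvj : v j ≠ v i) :
    ({k | (w ∘ Equiv.swap i j) k ≠ v k ∧ v k ≠ a} : Finset (Fin n)) ⊆
      ({k | w k ≠ v k ∧ v k ≠ a} : Finset (Fin n)).erase i := by
  intro k
  simp only [mem_filter, mem_univ, true_and, mem_erase, Function.comp_apply]
  rintro ⟨hk, hka⟩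
  rcases eq_or_ne k i with rfl | hki
  · simp [hj] at hk
  rcases eq_or_ne k j with rfl | hkj
  · exact ⟨hki, hj ▸ hvj.symm, hka⟩
  · exact ⟨hki, by rwa [Equiv.swap_apply_of_ne_of_ne hki hkj] at hk, hka⟩

variable {P : Fin σ → ℕ}

def Words.swap (w : Words n σ P) (i j : Fin n) : Words n σ P :=
  ⟨w.1 ∘ Equiv.swap i j, (parikh_comp_perm w.1 _).trans w.2⟩

theorem configGraph_adj_swap {w : Words n σ P} {i j : Fin n} (h : w.1 i ≠ w.1 j) :
    (configGraph n σ P).Adj w (w.swap i j) := by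
  refine (SimpleGraph.fromRel_adj _ _ _).2 ⟨fun hw => h ?_, Or.inl ⟨i, j, ?_, h, rfl⟩⟩
  · simpa [Words.swap] using (congrFun (congrArg Subtype.val hw) j).symm
  · rintro rfl
    exact h rfl

theorem exists_walk_length_le (a : Fin σ) (v w : Words n σ P) :
    ∃ p : (configGraph n σ P).Walk w v, p.length ≤ #{i | w.1 i ≠ v.1 i ∧ v.1 i ≠ a} := by
  induction hk : #{i | w.1 i ≠ v.1 i ∧ v.1 i ≠ a} using Nat.strong_induction_on generalizing w
    with | _ k ih => ?_
  have hP : parikh w.1 = parikh v.1 := w.2.trans v.2.symm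
  by_cases hmis : ∀ i, w.1 i ≠ v.1 i → v.1 i = a
  · obtain rfl : w = v := Subtype.ext (eq_of_parikh_eq_of_forall_ne hP a hmis)
    exact ⟨.nil, Nat.zero_le _⟩
  push Not at hmis
  obtain ⟨i, hi, hia⟩ := hmis
  obtain ⟨j, hj, hvj⟩ := exists_eq_and_ne_of_parikh_eq hP hi
  have hdec : #{l | (w.swap i j).1 l ≠ v.1 l ∧ v.1 l ≠ a} < k := by
    have hmem : i ∈ ({l | w.1 l ≠ v.1 l ∧ v.1 l ≠ a} : Finset (Fin n)) := by simp [hi, hia]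
    calc _ ≤ _ := card_le_card (filter_comp_swap_subset_erase a hj hvj)
      _ < k := hk ▸ card_erase_lt_of_mem hmem
  obtain ⟨p, hp⟩ := ih _ hdec (w.swap i j) rfl
  exact ⟨.cons (configGraph_adj_swap (hj ▸ hi)) p, by simp only [SimpleGraph.Walk.length_cons]; omega⟩

theorem configGraph_dist_le_sub (a : Fin σ) (w v : Words n σ P) :
    (configGraph n σ P).dist w v ≤ n - P a := by
  obtain ⟨p, hp⟩ := exists_walk_length_le a v w
  have hcount : #{i | v.1 i ≠ a} = n - P a := by
    rw [← congrFun v.2 a, parikh, filter_not, card_sdiff_of_subset (filter_subset _ _), card_univ,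
      Fintype.card_fin]
  calc _ ≤ p.length := SimpleGraph.dist_le p
    _ ≤ #{i | v.1 i ≠ a} := hp.trans (card_le_card fun i => by simp +contextual)
    _ = n - P a := hcount

theorem stmt11_general (n σ : ℕ) (P : Fin σ → ℕ)
    (w v : Words n σ P) :
    (configGraph n σ P).dist w v ≤ n - Finset.univ.sup P := by
  cases isEmpty_or_nonempty (Fin σ)
  · rw [Subsingleton.elim w v, SimpleGraph.dist_self]
    exact Nat.zero_le _
  obtain ⟨a, -, ha⟩ := exists_mem_eq_sup univ univ_nonempty P
  exact ha ▸ configGraph_dist_le_sub a w v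

theorem stmt11 (n σ : ℕ) (P : Fin σ → ℕ) (hn : ∑ i, P i = n)
    (w v : Words n σ P) :
    (configGraph n σ P).dist w v ≤ n - Finset.univ.sup P :=
  stmt11_general n σ P w v
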